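/- arXiv:0710.2746 — 2 statements merged into one kernel-verified Lean document; each statement's English description precedes it below -/
import Mathlib

section
/- Consider the histogram kernel on [0,1]: for θ ∈ [0,1] and positive integer m, K(x;θ,m) = m if there exists i ∈ {1,…,m} such that both x and θ lie in ((i−1)/m, i/m], and K(x;θ,m) = 0 otherwise. Let Π be a prior on M([0,1] × ℕ₊) whose weak support contains all of M([0,1] × ℕ₊), and for P ∈ M([0,1] × ℕ₊) set f_P(x) = ∫ K(x;θ,m) dP(θ,m). If f0 is a continuous probability density on [0,1], then for every ε > 0, Π{P : ∫_0^1 f0 log(f0 / f_P) < ε} > 0. -/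
/-!
By uniform continuity, on a fine enough grid of `m` bins `f0` is dominated by `(1 + c) m w_i` on
bin `i` for weights `w_i` of total mass `< 1`. The mixing measures giving each cylinder
`(bin i) × {m}` more mass than `w_i` form a weakly open set (portmanteau), nonempty because the
weights leave room for a discrete measure, so it has positive prior mass. For such `P` the
histogram kernel gives `f_P ≥ m P((bin i) × {m}) ≥ f0 / (1 + c)` on bin `i`, so the KL
integrand is at most `c f0` and the divergence at most `c`.
-/

open MeasureTheory Real Filter

/-- The measurable structure on the space of probability measures, induced from the
σ-algebra on measures generated by the evaluation maps. -/
noncomputable instance ProbabilityMeasure.instMeasurableSpace' {Ω : Type*} [MeasurableSpace Ω] :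
    MeasurableSpace (MeasureTheory.ProbabilityMeasure Ω) :=
  inferInstanceAs (MeasurableSpace {μ : MeasureTheory.Measure Ω // MeasureTheory.IsProbabilityMeasure μ})

instance : BorelSpace (Set.Icc (0 : ℝ) 1) := Subtype.borelSpace _
instance : BorelSpace {n : ℕ // 0 < n} := Subtype.borelSpace _

open Set
open scoped NNReal ENNReal

/-- Bin `i` of the grid of mesh `1 / m`, indexed from `0`; `InSameBin` indexes the same bins
from `1`, as the paper does. -/
def histBin (m i : ℕ) : Set ℝ := Ioc ((i : ℝ) / m) ((i + 1 : ℝ) / m)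

lemma Icc_div_subset_Icc {m i : ℕ} (hi : i < m) :
    Icc ((i : ℝ) / m) ((i + 1 : ℝ) / m) ⊆ Icc 0 1 := by
  have hm : (0 : ℝ) < m := by exact_mod_cast (Nat.zero_le i).trans_lt hi
  refine Icc_subset_Icc (by positivity) ?_
  rw [div_le_one hm]
  exact_mod_cast hi

lemma histBin_subset_Icc {m i : ℕ} (hi : i < m) : histBin m i ⊆ Icc 0 1 :=
  Ioc_subset_Icc_self.trans (Icc_div_subset_Icc hi)

lemma exists_mem_histBin {m : ℕ} (hm : 0 < m) {x : ℝ} (hx : x ∈ Ioc (0 : ℝ) 1) :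
    ∃ i < m, x ∈ histBin m i := by
  have hm' : (0 : ℝ) < m := by exact_mod_cast hm
  have hxm : 0 < x * m := mul_pos hx.1 hm'
  have hj : 1 ≤ ⌈x * m⌉₊ := Nat.one_le_ceil_iff.2 hxm
  have hjm : ⌈x * m⌉₊ ≤ m := Nat.ceil_le.2 (by nlinarith [hx.2])
  refine ⟨⌈x * m⌉₊ - 1, by omega, ?_, ?_⟩
  · rw [div_lt_iff₀ hm', Nat.cast_sub hj, Nat.cast_one]
    linarith [Nat.ceil_lt_add_one hxm.le]
  · rw [le_div_iff₀ hm', Nat.cast_sub hj, Nat.cast_one, sub_add_cancel]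
    exact Nat.le_ceil _

lemma exists_forall_mem_histBin_dist_lt {f : ℝ → ℝ} (hf : ContinuousOn f (Icc 0 1))
    {η : ℝ} (hη : 0 < η) :
    ∃ m : ℕ, 0 < m ∧ ∀ i < m, ∀ x ∈ histBin m i, dist (f x) (f (i / m)) < η := by
  obtain ⟨δ, hδ, hfδ⟩ :=
    Metric.uniformContinuousOn_iff.1 (isCompact_Icc.uniformContinuousOn_of_continuous hf) η hη
  obtain ⟨m, hδm⟩ := exists_nat_gt (1 / δ)
  have hm : (0 : ℝ) < m := (one_div_pos.2 hδ).trans hδm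
  refine ⟨m, by exact_mod_cast hm, fun i hi x hx => hfδ x (histBin_subset_Icc hi hx) _ ?_ ?_⟩
  · refine ⟨by positivity, div_le_one_of_le₀ ?_ hm.le⟩
    exact_mod_cast hi.le
  · have hmδ : 1 / m < δ := by rwa [div_lt_comm₀ hm hδ]
    rw [Real.dist_eq, abs_of_pos (sub_pos.2 hx.1)]
    have : x ≤ i / m + 1 / m := by rw [← add_div]; exact hx.2
    linarith

lemma sum_div_le_integral_of_le_on_histBin {f : ℝ → ℝ} {m : ℕ} (hm : 0 < m)
    (hf : IntervalIntegrable f volume 0 1) {a : ℕ → ℝ}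
    (ha : ∀ i < m, ∀ x ∈ histBin m i, a i ≤ f x) :
    ∑ i ∈ Finset.range m, a i / m ≤ ∫ x in (0 : ℝ)..1, f x := by
  have hm' : (0 : ℝ) < m := by exact_mod_cast hm
  have hbin_le : ∀ i : ℕ, (i : ℝ) / m ≤ (i + 1 : ℝ) / m := fun i => by gcongr; linarith
  have hint : ∀ i < m, IntervalIntegrable f volume ((i : ℝ) / m) ((i + 1 : ℝ) / m) :=
    fun i hi => hf.mono_set <| by
      rw [Set.uIcc_of_le (hbin_le i), Set.uIcc_of_le zero_le_one]
      exact Icc_div_subset_Icc hi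
  have hsum := intervalIntegral.sum_integral_adjacent_intervals
    (a := fun i : ℕ => (i : ℝ) / m) (f := f) (μ := volume) fun i hi => by
      push_cast; exact hint i hi
  simp only [Nat.cast_zero, zero_div, div_self hm'.ne', Nat.cast_add, Nat.cast_one] at hsum
  rw [← hsum]
  refine Finset.sum_le_sum fun i hi => ?_
  have hi := Finset.mem_range.1 hi
  calc a i / m = ∫ _ in Ioc ((i : ℝ) / m) ((i + 1 : ℝ) / m), a i := by
        rw [setIntegral_const, volume_real_Ioc_of_le (hbin_le i), smul_eq_mul]
        field_simp
        ring
    _ ≤ ∫ x in Ioc ((i : ℝ) / m) ((i + 1 : ℝ) / m), f x :=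
        setIntegral_mono_on (integrableOn_const (by simp)) ((hint i hi).1) measurableSet_Ioc
          (ha i hi)
    _ = ∫ x in (i : ℝ) / m..(i + 1 : ℝ) / m, f x :=
        (intervalIntegral.integral_of_le (hbin_le i)).symm

lemma exists_histogram_dominating {f : ℝ → ℝ} (hf : ContinuousOn f (Icc 0 1))
    (hf_nonneg : ∀ x ∈ Icc (0 : ℝ) 1, 0 ≤ f x) (hf_int : ∫ x in Icc (0 : ℝ) 1, f x = 1)
    {c : ℝ} (hc : 0 < c) :
    ∃ m : ℕ, 0 < m ∧ ∃ w : ℕ → ℝ≥0, ∑ i ∈ Finset.range m, w i < 1 ∧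
      ∀ i < m, ∀ x ∈ histBin m i, f x ≤ (1 + c) * m * w i := by
  obtain ⟨m, hm, hosc⟩ := exists_forall_mem_histBin_dist_lt hf (div_pos hc four_pos)
  have hm' : (0 : ℝ) < m := by exact_mod_cast hm
  have hleft : ∀ i < m, (i : ℝ) / m ∈ Icc (0 : ℝ) 1 := fun i hi =>
    Icc_div_subset_Icc hi (left_mem_Icc.2 (by gcongr; linarith))
  set b : ℕ → ℝ := fun i => f (i / m) + c / 4
  have hfb : ∀ i < m, ∀ x ∈ histBin m i, f x ≤ b i := fun i hi x hx => by
    have := (abs_lt.1 (hosc i hi x hx)).2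
    simp only [b]
    linarith
  have hsum : ∑ i ∈ Finset.range m, b i ≤ m * (1 + c / 2) := by
    have hlow := sum_div_le_integral_of_le_on_histBin hm
      (hf.intervalIntegrable_of_Icc zero_le_one) (a := fun i => f (i / m) - c / 4)
      fun i hi x hx => by linarith [(abs_lt.1 (hosc i hi x hx)).1]
    rw [intervalIntegral.integral_of_le zero_le_one, ← integral_Icc_eq_integral_Ioc, hf_int,
      ← Finset.sum_div, div_le_one hm', Finset.sum_sub_distrib, Finset.sum_const,
      Finset.card_range, nsmul_eq_mul] at hlow
    simp only [b, Finset.sum_add_distrib, Finset.sum_const, Finset.card_range, nsmul_eq_mul]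
    linarith
  refine ⟨m, hm, fun i => Real.toNNReal (b i / (m * (1 + c))), ?_, fun i hi x hx => ?_⟩
  · have hb_nonneg : ∀ i ∈ Finset.range m, 0 ≤ b i / (m * (1 + c)) := fun i hi =>
      div_nonneg (add_nonneg (hf_nonneg _ (hleft i (Finset.mem_range.1 hi))) (by positivity))
        (by positivity)
    rw [← Real.toNNReal_sum_of_nonneg hb_nonneg, Real.toNNReal_lt_one, ← Finset.sum_div,
      div_lt_one (by positivity)]
    nlinarith
  · calc f x ≤ (1 + c) * m * (b i / (m * (1 + c))) := by
          rw [mul_comm (m : ℝ), mul_div_cancel₀ _ (by positivity)]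
          exact hfb i hi x hx
      _ ≤ (1 + c) * m * Real.toNNReal (b i / (m * (1 + c))) := by
          gcongr
          exact Real.le_coe_toNNReal _

lemma mul_log_div_le {a b c : ℝ} (ha : 0 ≤ a) (hc : 0 ≤ c) (h : b = 0 ∨ a ≤ (1 + c) * b) :
    a * log (a / b) ≤ c * a := by
  rcases h with rfl | h
  · simpa using mul_nonneg hc ha
  rcases ha.eq_or_lt with rfl | ha
  · simp
  have hb : 0 < b := by nlinarith
  have hlog : log (a / b) ≤ c := by
    have hab : a / b ≤ 1 + c := (div_le_iff₀ hb).2 h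
    linarith [Real.log_le_sub_one_of_pos (div_pos ha hb)]
  rw [mul_comm c]
  exact mul_le_mul_of_nonneg_left hlog ha.le

lemma integral_mul_log_div_le {α : Type*} [MeasurableSpace α] {μ : Measure α} {f g : α → ℝ}
    {c : ℝ} (hc : 0 ≤ c) (hf : Integrable f μ) (hf_nonneg : ∀ᵐ x ∂μ, 0 ≤ f x)
    (hfg : ∀ᵐ x ∂μ, g x = 0 ∨ f x ≤ (1 + c) * g x) :
    ∫ x, f x * log (f x / g x) ∂μ ≤ c * ∫ x, f x ∂μ := by
  by_cases hint : Integrable (fun x => f x * log (f x / g x)) μ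
  · rw [← integral_const_mul]
    refine integral_mono_ae hint (hf.const_mul c) ?_
    filter_upwards [hf_nonneg, hfg] with x hx hxg
    exact mul_log_div_le hx hc hxg
  · rw [integral_undef hint]
    exact mul_nonneg hc (integral_nonneg_of_ae hf_nonneg)

lemma integral_eq_zero_or_mul_measureReal_le {α : Type*} [MeasurableSpace α] {μ : Measure α}
    [IsFiniteMeasure μ] {f : α → ℝ} (hf : 0 ≤ f) {c : ℝ} (hc : 0 ≤ c) {s : Set α}
    (hcf : ∀ x ∈ s, c ≤ f x) :
    ∫ x, f x ∂μ = 0 ∨ c * μ.real s ≤ ∫ x, f x ∂μ := by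
  by_cases hint : Integrable f μ
  · exact Or.inr <| (mul_le_mul_of_nonneg_left (measureReal_mono hcf) hc).trans
      (mul_meas_ge_le_integral_of_nonneg (ae_of_all _ hf) hint c)
  · exact Or.inl (integral_undef hint)

namespace MeasureTheory.ProbabilityMeasure

variable {Ω : Type*} [MeasurableSpace Ω]

lemma isOpen_setOf_lt_apply [TopologicalSpace Ω] [OpensMeasurableSpace Ω]
    [HasOuterApproxClosed Ω] {G : Set Ω} (hG : IsOpen G) (t : ℝ≥0) :
    IsOpen {P : ProbabilityMeasure Ω | t < P G} := by
  refine isOpen_iff_mem_nhds.2 fun P hP => ?_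
  have hP' : (t : ℝ≥0∞) < (P : Measure Ω) G := by
    rwa [← ennreal_coeFn_eq_coeFn_toMeasure, ENNReal.coe_lt_coe]
  filter_upwards [eventually_lt_of_lt_liminf
    (hP'.trans_le (le_liminf_measure_open_of_tendsto tendsto_id hG))] with Q hQ
  rwa [← ennreal_coeFn_eq_coeFn_toMeasure, ENNReal.coe_lt_coe] at hQ

lemma exists_lt_apply {ι : Type*} {s : Finset ι} (hs : s.Nonempty) {G : ι → Set Ω}
    (hG : ∀ i ∈ s, (G i).Nonempty) {t : ι → ℝ≥0} (ht : ∑ i ∈ s, t i < 1) :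
    ∃ P : ProbabilityMeasure Ω, ∀ i ∈ s, t i < P (G i) := by
  have : Nonempty Ω := (hG _ hs.choose_spec).to_subtype.map Subtype.val
  choose! x hx using hG
  set ρ : ℝ≥0 := (1 - ∑ i ∈ s, t i) / s.card
  have hρ : 0 < ρ := div_pos (tsub_pos_of_lt ht) (by exact_mod_cast hs.card_pos)
  have hw : ∑ i ∈ s, (t i + ρ) = 1 := by
    rw [Finset.sum_add_distrib, Finset.sum_const, nsmul_eq_mul,
      mul_div_cancel₀ _ (by exact_mod_cast hs.card_ne_zero),
      add_tsub_cancel_of_le ht.le]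
  set μ : Measure Ω := ∑ i ∈ s, ((t i + ρ : ℝ≥0) : ℝ≥0∞) • Measure.dirac (x i)
  have hμ : IsProbabilityMeasure μ := ⟨by
    simp only [μ, Measure.finsetSum_apply, Measure.smul_apply, measure_univ, smul_eq_mul,
      mul_one]
    exact_mod_cast hw⟩
  refine ⟨⟨μ, hμ⟩, fun i hi => ?_⟩
  rw [mk_apply, ← ENNReal.coe_lt_coe, ENNReal.coe_toNNReal (measure_ne_top μ _)]
  calc (t i : ℝ≥0∞) < ((t i + ρ : ℝ≥0) : ℝ≥0∞) := by exact_mod_cast lt_add_of_pos_right _ hρ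
    _ = (((t i + ρ : ℝ≥0) : ℝ≥0∞) • Measure.dirac (x i)) (G i) := by
        rw [Measure.smul_apply, Measure.dirac_apply_of_mem (hx i hi), smul_eq_mul, mul_one]
    _ ≤ μ (G i) := by
        rw [Measure.finsetSum_apply]
        exact Finset.single_le_sum (f := fun j => (((t j + ρ : ℝ≥0) : ℝ≥0∞) •
          Measure.dirac (x j)) (G i)) (fun _ _ => zero_le) hi

end MeasureTheory.ProbabilityMeasure

local notation "Θ" => Set.Icc (0 : ℝ) 1 × {n : ℕ // 0 < n}

def binCylinder (m i : ℕ) : Set Θ :=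
  {p | (p.1 : ℝ) ∈ Ioo ((i : ℝ) / m) ((i + 1 : ℝ) / m) ∧ (p.2 : ℕ) = m}

lemma isOpen_binCylinder (m i : ℕ) : IsOpen (binCylinder m i) :=
  (isOpen_Ioo.preimage (continuous_subtype_val.comp continuous_fst)).inter
    ((isOpen_discrete {m}).preimage (continuous_subtype_val.comp continuous_snd))

lemma binCylinder_nonempty {m i : ℕ} (hi : i < m) : (binCylinder m i).Nonempty := by
  have hm : 0 < m := (Nat.zero_le i).trans_lt hi
  have hm' : (0 : ℝ) < m := by exact_mod_cast hm
  have hmid : (2 * i + 1 : ℝ) / (2 * m) ∈ Ioo ((i : ℝ) / m) ((i + 1 : ℝ) / m) := by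
    constructor
    · rw [div_lt_div_iff₀ hm' (by positivity)]; nlinarith
    · rw [div_lt_div_iff₀ (by positivity) hm']; nlinarith
  exact ⟨(⟨_, Icc_div_subset_Icc hi (Ioo_subset_Icc_self hmid)⟩, ⟨m, hm⟩), hmid, rfl⟩

def InSameBin (m : ℕ) (x θ : ℝ) : Prop :=
  ∃ i : ℕ, 1 ≤ i ∧ i ≤ m ∧ x ∈ Set.Ioc ((i - 1 : ℝ) / m) ((i : ℝ) / m) ∧
    θ ∈ Set.Ioc ((i - 1 : ℝ) / m) ((i : ℝ) / m)

lemma inSameBin_of_mem_histBin {m i : ℕ} {x θ : ℝ} (hi : i < m) (hx : x ∈ histBin m i)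
    (hθ : θ ∈ histBin m i) : InSameBin m x θ := by
  refine ⟨i + 1, by omega, hi, ?_, ?_⟩ <;> simpa [histBin] using ‹_›

lemma histKernel_nonneg {K : ℝ → ℝ → ℕ → ℝ} (hK_pos : ∀ x θ m, InSameBin m x θ → K x θ m = m)
    (hK_zero : ∀ x θ m, ¬InSameBin m x θ → K x θ m = 0) (x θ : ℝ) (m : ℕ) : 0 ≤ K x θ m := by
  by_cases h : InSameBin m x θ
  · rw [hK_pos x θ m h]; positivity
  · rw [hK_zero x θ m h]

lemma integral_histKernel_eq_zero_or_le {K : ℝ → ℝ → ℕ → ℝ}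
    (hK_pos : ∀ x θ m, InSameBin m x θ → K x θ m = m)
    (hK_zero : ∀ x θ m, ¬InSameBin m x θ → K x θ m = 0) (P : ProbabilityMeasure Θ)
    {m i : ℕ} {x : ℝ} (hi : i < m) (hx : x ∈ histBin m i) :
    ∫ p : Θ, K x p.1 p.2 ∂(P : Measure Θ) = 0 ∨
      m * P (binCylinder m i) ≤ ∫ p : Θ, K x p.1 p.2 ∂(P : Measure Θ) := by
  rw [← ProbabilityMeasure.measureReal_eq_coe_coeFn]
  refine integral_eq_zero_or_mul_measureReal_le (fun p => histKernel_nonneg hK_pos hK_zero _ _ _)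
    m.cast_nonneg fun p hp => ?_
  rw [hp.2, hK_pos x p.1 m (inSameBin_of_mem_histBin hi hx (Ioo_subset_Ioc_self hp.1))]

lemma eq_zero_or_le_mul_integral_histKernel {K : ℝ → ℝ → ℕ → ℝ}
    (hK_pos : ∀ x θ m, InSameBin m x θ → K x θ m = m)
    (hK_zero : ∀ x θ m, ¬InSameBin m x θ → K x θ m = 0) {f : ℝ → ℝ} {m : ℕ} (hm : 0 < m)
    {w : ℕ → ℝ≥0} {c : ℝ} (hc : 0 ≤ c) (hfw : ∀ i < m, ∀ x ∈ histBin m i, f x ≤ (1 + c) * m * w i)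
    {P : ProbabilityMeasure Θ} (hP : ∀ i ∈ Finset.range m, w i < P (binCylinder m i))
    {x : ℝ} (hx : x ∈ Ioc (0 : ℝ) 1) :
    ∫ p : Θ, K x p.1 p.2 ∂(P : Measure Θ) = 0 ∨
      f x ≤ (1 + c) * ∫ p : Θ, K x p.1 p.2 ∂(P : Measure Θ) := by
  obtain ⟨i, hi, hxi⟩ := exists_mem_histBin hm hx
  refine (integral_histKernel_eq_zero_or_le hK_pos hK_zero P hi hxi).imp_right fun h => ?_
  calc f x ≤ (1 + c) * (m * w i) := by rw [← mul_assoc]; exact hfw i hi x hxi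
    _ ≤ (1 + c) * (m * P (binCylinder m i)) := by
        gcongr; exact (hP i (Finset.mem_range.2 hi)).le
    _ ≤ _ := by gcongr

theorem kl_property_of_histogram_mixture_general
    (K : ℝ → ℝ → ℕ → ℝ)
    (hK_pos : ∀ (x θ : ℝ) (m : ℕ),
      (∃ i : ℕ, 1 ≤ i ∧ i ≤ m ∧ x ∈ Set.Ioc ((i - 1 : ℝ) / m) ((i : ℝ) / m) ∧
        θ ∈ Set.Ioc ((i - 1 : ℝ) / m) ((i : ℝ) / m)) → K x θ m = m)
    (hK_zero : ∀ (x θ : ℝ) (m : ℕ),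
      ¬(∃ i : ℕ, 1 ≤ i ∧ i ≤ m ∧ x ∈ Set.Ioc ((i - 1 : ℝ) / m) ((i : ℝ) / m) ∧
        θ ∈ Set.Ioc ((i - 1 : ℝ) / m) ((i : ℝ) / m)) → K x θ m = 0)
    (f0 : ℝ → ℝ) (hf0_cont : ContinuousOn f0 (Set.Icc 0 1))
    (hf0_nonneg : ∀ x ∈ Set.Icc (0 : ℝ) 1, 0 ≤ f0 x)
    (hf0_prob : ∫ x in Set.Icc (0 : ℝ) 1, f0 x = 1)
    (Pr : Measure (ProbabilityMeasure (Set.Icc (0 : ℝ) 1 × {n : ℕ // 0 < n})))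
    (fP : ProbabilityMeasure (Set.Icc (0 : ℝ) 1 × {n : ℕ // 0 < n}) → ℝ → ℝ)
    (hfP : ∀ P x, fP P x =
      ∫ p : Set.Icc (0 : ℝ) 1 × {n : ℕ // 0 < n}, K x (p.1 : ℝ) (p.2 : ℕ)
        ∂(P : Measure (Set.Icc (0 : ℝ) 1 × {n : ℕ // 0 < n})))
    -- the weak support of the prior is everything
    (hPr_supp : ∀ U : Set (ProbabilityMeasure (Set.Icc (0 : ℝ) 1 × {n : ℕ // 0 < n})),
      IsOpen U → U.Nonempty → 0 < Pr U) :
    ∀ ε > (0 : ℝ),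
      0 < Pr {P | (∫ x in Set.Icc (0 : ℝ) 1, f0 x * log (f0 x / fP P x)) < ε} := by
  intro ε hε
  obtain ⟨m, hm, w, hw_sum, hw_dom⟩ :=
    exists_histogram_dominating hf0_cont hf0_nonneg hf0_prob (half_pos hε)
  set U := {P : ProbabilityMeasure Θ | ∀ i ∈ Finset.range m, w i < P (binCylinder m i)}
  have hU_open : IsOpen U := by
    simp only [U, Set.ofPred_forall]
    exact isOpen_biInter_finset fun i _ =>
      ProbabilityMeasure.isOpen_setOf_lt_apply (isOpen_binCylinder m i) _
  have hU_ne : U.Nonempty :=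
    ProbabilityMeasure.exists_lt_apply (Finset.nonempty_range_iff.2 hm.ne')
      (fun i hi => binCylinder_nonempty (Finset.mem_range.1 hi)) hw_sum
  refine (hPr_supp U hU_open hU_ne).trans_le (measure_mono fun P hP => ?_)
  show _ < ε
  -- the bins cover `(0, 1]` but not `0`
  rw [integral_Icc_eq_integral_Ioc] at hf0_prob ⊢
  calc _ ≤ ε / 2 * ∫ x in Ioc (0 : ℝ) 1, f0 x :=
        integral_mul_log_div_le (half_pos hε).le
          ((hf0_cont.integrableOn_compact isCompact_Icc).mono_set Ioc_subset_Icc_self)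
          (ae_restrict_of_forall_mem measurableSet_Ioc fun x hx =>
            hf0_nonneg x (Ioc_subset_Icc_self hx))
          (ae_restrict_of_forall_mem measurableSet_Ioc fun x hx => by
            rw [hfP]
            exact eq_zero_or_le_mul_integral_histKernel hK_pos hK_zero hm (half_pos hε).le
              hw_dom hP hx)
    _ < ε := by rw [hf0_prob]; linarith

/-- **Theorem 9**: KL property for the histogram kernel mixture prior on `[0,1]`:
if `f0` is continuous on `[0,1]` and the prior on mixing distributions over
`[0,1] × ℕ₊` has full weak support, then `f0` is in the KL support. -/
theorem kl_property_of_histogram_mixture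
    (K : ℝ → ℝ → ℕ → ℝ)
    (hK_pos : ∀ (x θ : ℝ) (m : ℕ),
      (∃ i : ℕ, 1 ≤ i ∧ i ≤ m ∧ x ∈ Set.Ioc ((i - 1 : ℝ) / m) ((i : ℝ) / m) ∧
        θ ∈ Set.Ioc ((i - 1 : ℝ) / m) ((i : ℝ) / m)) → K x θ m = m)
    (hK_zero : ∀ (x θ : ℝ) (m : ℕ),
      ¬(∃ i : ℕ, 1 ≤ i ∧ i ≤ m ∧ x ∈ Set.Ioc ((i - 1 : ℝ) / m) ((i : ℝ) / m) ∧
        θ ∈ Set.Ioc ((i - 1 : ℝ) / m) ((i : ℝ) / m)) → K x θ m = 0)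
    (f0 : ℝ → ℝ) (hf0_cont : ContinuousOn f0 (Set.Icc 0 1))
    (hf0_nonneg : ∀ x ∈ Set.Icc (0 : ℝ) 1, 0 ≤ f0 x)
    (hf0_prob : ∫ x in Set.Icc (0 : ℝ) 1, f0 x = 1)
    (Pr : Measure (ProbabilityMeasure (Set.Icc (0 : ℝ) 1 × {n : ℕ // 0 < n})))
    [IsProbabilityMeasure Pr]
    (fP : ProbabilityMeasure (Set.Icc (0 : ℝ) 1 × {n : ℕ // 0 < n}) → ℝ → ℝ)
    (hfP : ∀ P x, fP P x =
      ∫ p : Set.Icc (0 : ℝ) 1 × {n : ℕ // 0 < n}, K x (p.1 : ℝ) (p.2 : ℕ)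
        ∂(P : Measure (Set.Icc (0 : ℝ) 1 × {n : ℕ // 0 < n})))
    -- the weak support of the prior is everything
    (hPr_supp : ∀ U : Set (ProbabilityMeasure (Set.Icc (0 : ℝ) 1 × {n : ℕ // 0 < n})),
      IsOpen U → U.Nonempty → 0 < Pr U) :
    ∀ ε > (0 : ℝ),
      0 < Pr {P | (∫ x in Set.Icc (0 : ℝ) 1, f0 x * log (f0 x / fP P x)) < ε} :=
  kl_property_of_histogram_mixture_general K hK_pos hK_zero f0 hf0_cont hf0_nonneg hf0_prob Pr fP
    hfP hPr_supp
end

section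
/- Let f0 be a continuous, bounded probability density on [0,∞) with 0 < f0(x) ≤ M < ∞ for all x > 0, satisfying |∫ f0 log f0| < ∞, ∫ f0(x) log(f0(x)/φ_δ(x)) dx < ∞ for some δ > 0 (with φ_δ(x) = inf{f0(t) : t ∈ [x, x+δ]} for 0 < x < 1 and φ_δ(x) = inf{f0(t) : t ∈ (x−δ, x]} for x ≥ 1), and ∫ max(x^{−η−2}, x^{η+2}) f0(x) dx < ∞ for some η > 0. For m > 1 define K_m(x;α) = m^α x^{α−1} e^{−mx} / Γ(α) (the Gamma(α, 1/m) density), t_m = (∫_{1/m}^m f0(s) ds)^{−1}, and f_m(x) = t_m ∫_2^{1+m²} K_m(x;α) m^{−1} f0((α−1)/m) dα. Then for each x > 0, f_m(x) → f0(x) as m → ∞. -/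
open MeasureTheory Real Filter

/-!
Substituting `u = α - 1` turns `f_m(x)` into `t_m ∫_1^{m²} k_{mx}(u) f0(u/m) du`, where
`k_t(u) = t^u e^{-t} / Γ(u + 1)` interpolates the Poisson weights `p_t(n) = t^n e^{-t} / n!`.
Since `log Γ` is convex, `log k_t` is concave and its slope on `[n, n + 1]` is at most
`log (t / n)`; hence on that interval `k_t` lies between `p_t(n) min(1, t / (n + 1))` and
`p_t(n) max(1, t / n)`. Chernoff bounds for the Poisson law then show that `k_t` has mass
`1 + O(ε)` on the window `[(1 - ε) t, (1 + ε) t]` and mass `O(t e^{-t ε² / 4})` outside it.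
For `t = m x` the window is `u / m ∈ [(1 - ε) x, (1 + ε) x]`, so continuity and boundedness of
`f0` give `∫ k_{mx}(u) f0(u/m) du → f0(x)`; and `t_m → 1` because `f0` is a probability density.
-/

namespace GammaSmoothing

open scoped Topology

section PoissonWeight

open Finset

noncomputable def poissonWeight (t : ℝ) (n : ℕ) : ℝ := t ^ n * exp (-t) / n.factorial

lemma poissonWeight_nonneg {t : ℝ} (ht : 0 ≤ t) (n : ℕ) : 0 ≤ poissonWeight t n := by
  unfold poissonWeight; positivity

lemma poissonWeight_succ (t : ℝ) (n : ℕ) :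
    poissonWeight t (n + 1) = poissonWeight t n * (t / (n + 1)) := by
  rw [poissonWeight, poissonWeight, Nat.factorial_succ]
  push_cast
  field_simp
  ring

lemma hasSum_poissonWeight_mul_exp (t θ : ℝ) :
    HasSum (fun n : ℕ => poissonWeight t n * exp (θ * n)) (exp (t * exp θ - t)) := by
  have h := (NormedSpace.expSeries_div_hasSum_exp (t * exp θ)).mul_right (exp (-t))
  rw [← exp_eq_exp_ℝ, ← exp_add, ← sub_eq_add_neg] at h
  refine (congrArg (HasSum · _) (funext fun n => ?_)).mpr h
  rw [poissonWeight, mul_pow, ← exp_nat_mul, mul_comm (n : ℝ) θ]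
  ring

lemma hasSum_poissonWeight (t : ℝ) : HasSum (poissonWeight t) 1 := by
  simpa using hasSum_poissonWeight_mul_exp t 0

lemma sum_poissonWeight_le_exp {t θ a : ℝ} (ht : 0 ≤ t) {s : Finset ℕ}
    (hs : ∀ n ∈ s, a ≤ θ * n) : ∑ n ∈ s, poissonWeight t n ≤ exp (t * exp θ - t - a) := by
  have hsum := hasSum_poissonWeight_mul_exp t θ
  calc ∑ n ∈ s, poissonWeight t n
      ≤ ∑ n ∈ s, poissonWeight t n * exp (θ * n) * exp (-a) := by
        refine sum_le_sum fun n hn => ?_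
        rw [mul_assoc, ← exp_add]
        exact le_mul_of_one_le_right (poissonWeight_nonneg ht n)
          (one_le_exp (by linarith [hs n hn]))
    _ = (∑ n ∈ s, poissonWeight t n * exp (θ * n)) * exp (-a) := (sum_mul ..).symm
    _ ≤ exp (t * exp θ - t) * exp (-a) := by
        gcongr
        exact sum_le_hasSum s (fun n _ => by have := poissonWeight_nonneg ht n; positivity) hsum
    _ = exp (t * exp θ - t - a) := by rw [← exp_add, ← sub_eq_add_neg]

lemma exp_le_one_add_add_sq {c : ℝ} (hc : |c| ≤ 1) : exp c ≤ 1 + c + c ^ 2 := by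
  linarith [(abs_le.1 (abs_exp_sub_one_sub_id_le hc)).2]

variable {t ε : ℝ}

lemma sum_range_ceil_poissonWeight_le (ht : 0 ≤ t) (hε : 0 ≤ ε) (hε' : ε ≤ 1) :
    ∑ n ∈ range ⌈(1 - ε) * t⌉₊, poissonWeight t n ≤ exp (1 - t * ε ^ 2 / 4) := by
  have hN : (⌈(1 - ε) * t⌉₊ : ℝ) ≤ (1 - ε) * t + 1 :=
    (Nat.ceil_lt_add_one (by nlinarith)).le
  refine (sum_poissonWeight_le_exp (θ := -(ε / 2)) (a := -(ε / 2) * ((1 - ε) * t + 1)) ht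
    fun n hn => ?_).trans (exp_le_exp.2 ?_)
  · have : (n : ℝ) ≤ ⌈(1 - ε) * t⌉₊ := by exact_mod_cast (mem_range.1 hn).le
    exact mul_le_mul_of_nonpos_left (this.trans hN) (by linarith)
  · have := exp_le_one_add_add_sq (c := -(ε / 2)) (by rw [abs_le]; constructor <;> linarith)
    nlinarith [mul_le_mul_of_nonneg_left this ht]

lemma sum_poissonWeight_le_of_ceil_le (ht : 0 ≤ t) (hε : 0 ≤ ε) (hε' : ε ≤ 1)
    {s : Finset ℕ} (hs : ∀ n ∈ s, ⌈(1 + ε) * t⌉₊ ≤ n) :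
    ∑ n ∈ s, poissonWeight t n ≤ exp (1 - t * ε ^ 2 / 4) := by
  refine (sum_poissonWeight_le_exp (θ := ε / 2) (a := ε / 2 * ((1 + ε) * t)) ht
    fun n hn => ?_).trans (exp_le_exp.2 ?_)
  · have : (1 + ε) * t ≤ n := (Nat.le_ceil _).trans (by exact_mod_cast hs n hn)
    exact mul_le_mul_of_nonneg_left this (by linarith)
  · have := exp_le_one_add_add_sq (c := ε / 2) (by rw [abs_le]; constructor <;> linarith)
    nlinarith [mul_le_mul_of_nonneg_left this ht]

end PoissonWeight

open Set

section Interp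

/-- Equal to `t ^ u * exp (-t) / Gamma (u + 1)` for `t > 0` (`poissonInterp_eq_rpow`); written
through `exp` so that its logarithm, concave in `u`, is explicit. -/
noncomputable def poissonInterp (t u : ℝ) : ℝ := exp (u * log t - t - log (Gamma (u + 1)))

variable {t u : ℝ}

lemma poissonInterp_nonneg : 0 ≤ poissonInterp t u := exp_nonneg _

lemma poissonInterp_natCast (ht : 0 < t) (n : ℕ) : poissonInterp t n = poissonWeight t n := by
  rw [poissonInterp, exp_sub, exp_sub, Gamma_nat_eq_factorial,
    exp_log (by positivity), mul_comm, exp_mul, exp_log ht, rpow_natCast, poissonWeight, exp_neg]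
  ring

lemma continuousOn_poissonInterp : ContinuousOn (poissonInterp t) (Ioi (-1)) := by
  intro u hu
  have hu : 0 < u + 1 := neg_lt_iff_pos_add.1 hu
  have hΓ : ContinuousAt (fun v => Gamma (v + 1)) u :=
    (differentiableAt_Gamma (s := u + 1) fun m h => by
      linarith [(m.cast_nonneg : (0 : ℝ) ≤ m)]).continuousAt.comp (f := fun v => v + 1)
        (continuous_add_const 1).continuousAt
  exact (((continuousAt_id.mul continuousAt_const).sub continuousAt_const).sub
    (hΓ.log (Gamma_pos_of_pos hu).ne')).rexp.continuousWithinAt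

lemma convexOn_log_Gamma_add_one_sub :
    ConvexOn ℝ (Ioi (-1)) (fun u => log (Gamma (u + 1)) - u * log t) := by
  have h := convexOn_log_Gamma.translate_left 1
  have hs : (fun z : ℝ => 1 + z) ⁻¹' Ioi 0 = Ioi (-1) := by ext; simp [neg_lt_iff_pos_add']
  rw [hs] at h
  exact h.sub (((LinearMap.id (R := ℝ)).smulRight (log t)).concaveOn (convex_Ioi _))

lemma poissonInterp_eq_exp : poissonInterp t u = exp (-t - (log (Gamma (u + 1)) - u * log t)) := by
  rw [poissonInterp]; ring_nf

lemma poissonWeight_mul_min_le_poissonInterp (ht : 0 < t) {n : ℕ} (hu : u ∈ Icc (n : ℝ) (n + 1)) :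
    poissonWeight t n * min 1 (t / (n + 1)) ≤ poissonInterp t u := by
  have hn : (0 : ℝ) ≤ n := n.cast_nonneg
  have hmax := (convexOn_log_Gamma_add_one_sub (t := t)).le_max_of_mem_Icc
    (show (n : ℝ) ∈ Ioi (-1) from by simp only [mem_Ioi]; linarith)
    (show (n : ℝ) + 1 ∈ Ioi (-1) from by simp only [mem_Ioi]; linarith) hu
  calc poissonWeight t n * min 1 (t / (n + 1))
      = min (poissonInterp t n) (poissonInterp t (n + 1)) := by
        rw [mul_min_of_nonneg _ _ (poissonWeight_nonneg ht.le n), mul_one, ← poissonWeight_succ,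
          poissonInterp_natCast ht, ← Nat.cast_succ, poissonInterp_natCast ht]
    _ ≤ poissonInterp t u := by
        simp only [poissonInterp_eq_exp, ← exp_monotone.map_min]
        rw [min_sub_sub_left]
        exact exp_le_exp.2 (by linarith)

lemma poissonInterp_le_poissonWeight_mul_max (ht : 0 < t) {n : ℕ} (hn : 1 ≤ n)
    (hu : u ∈ Icc (n : ℝ) (n + 1)) :
    poissonInterp t u ≤ poissonWeight t n * max 1 (t / n) := by
  set φ := fun v : ℝ => log (Gamma (v + 1)) - v * log t
  have hn' : (1 : ℝ) ≤ n := by exact_mod_cast hn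
  have hslope : φ n + (u - n) * (log n - log t) ≤ φ u := by
    rcases hu.1.eq_or_lt with rfl | hnu
    · simp
    have h := (convexOn_log_Gamma_add_one_sub (t := t)).slope_mono_adjacent
      (x := n - 1) (y := n) (z := u) (by simp only [mem_Ioi]; linarith)
      (by simp only [mem_Ioi]; linarith) (by linarith) hnu
    have hΓ : log (Gamma (n + 1)) = log n + log (Gamma n) := by
      rw [Gamma_add_one (by positivity),
        log_mul (by positivity) (Gamma_pos_of_pos (by positivity)).ne']
    rw [sub_sub_cancel, div_one, le_div_iff₀ (by linarith)] at h
    simp only [φ, sub_add_cancel, hΓ] at h ⊢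
    linarith
  have hexp : exp ((u - n) * log (t / n)) ≤ max 1 (t / n) := by
    rcases le_total (log (t / n)) 0 with hc | hc
    · exact (exp_le_one_iff.2 (mul_nonpos_of_nonneg_of_nonpos (by linarith [hu.1]) hc)).trans
        (le_max_left _ _)
    · refine le_trans ?_ (le_max_right _ _)
      exact (exp_le_exp.2 (mul_le_of_le_one_left hc (by linarith [hu.2]))).trans
        (exp_log (by positivity)).le
  calc poissonInterp t u ≤ poissonInterp t n * exp ((u - n) * log (t / n)) := by
        rw [poissonInterp_eq_exp, poissonInterp_eq_exp, ← exp_add, log_div ht.ne' (by positivity)]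
        exact exp_le_exp.2 (by linarith)
    _ ≤ poissonWeight t n * max 1 (t / n) := by
        rw [poissonInterp_natCast ht]
        exact mul_le_mul_of_nonneg_left hexp (poissonWeight_nonneg ht.le n)

end Interp

section UnitIntervals

variable {f : ℝ → ℝ} {c : ℕ → ℝ} {a b : ℕ}

lemma intervalIntegral_le_sum_Ico (hab : a ≤ b)
    (hf : ∀ n ∈ Finset.Ico a b, IntervalIntegrable f volume n (n + 1))
    (hle : ∀ n ∈ Finset.Ico a b, ∀ u ∈ Icc (n : ℝ) (n + 1), f u ≤ c n) :
    ∫ u in (a : ℝ)..b, f u ≤ ∑ n ∈ Finset.Ico a b, c n := by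
  rw [← intervalIntegral.sum_integral_adjacent_intervals_Ico (a := fun n : ℕ => (n : ℝ)) hab
    (by simpa using hf)]
  refine Finset.sum_le_sum fun n hn => ?_
  push_cast
  simpa using intervalIntegral.integral_mono_on (by linarith) (hf n hn) intervalIntegrable_const
    (hle n hn)

lemma sum_Ico_le_intervalIntegral (hab : a ≤ b)
    (hf : ∀ n ∈ Finset.Ico a b, IntervalIntegrable f volume n (n + 1))
    (hle : ∀ n ∈ Finset.Ico a b, ∀ u ∈ Icc (n : ℝ) (n + 1), c n ≤ f u) :
    ∑ n ∈ Finset.Ico a b, c n ≤ ∫ u in (a : ℝ)..b, f u := by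
  rw [← intervalIntegral.sum_integral_adjacent_intervals_Ico (a := fun n : ℕ => (n : ℝ)) hab
    (by simpa using hf)]
  refine Finset.sum_le_sum fun n hn => ?_
  push_cast
  simpa using intervalIntegral.integral_mono_on (by linarith) intervalIntegrable_const (hf n hn)
    (hle n hn)

end UnitIntervals

section Mass

variable {t ε : ℝ}

lemma intervalIntegrable_poissonInterp {a b : ℝ} (ha : 0 ≤ a) (hb : 0 ≤ b) :
    IntervalIntegrable (poissonInterp t) volume a b :=
  (continuousOn_poissonInterp.mono fun u hu => show -1 < u by
    linarith [le_min ha hb, hu.1]).intervalIntegrable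

lemma integral_poissonInterp_le_sum {a b : ℕ} (ht : 0 < t) (ha : 1 ≤ a) (hab : a ≤ b) :
    ∫ u in (a : ℝ)..b, poissonInterp t u ≤
      ∑ n ∈ Finset.Ico a b, poissonWeight t n * max 1 (t / n) :=
  intervalIntegral_le_sum_Ico hab (fun n _ => intervalIntegrable_poissonInterp (by positivity)
    (by positivity)) fun n hn _ hu =>
      poissonInterp_le_poissonWeight_mul_max ht (ha.trans (Finset.mem_Ico.1 hn).1) hu

lemma sum_le_integral_poissonInterp {a b : ℕ} (ht : 0 < t) (hab : a ≤ b) :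
    ∑ n ∈ Finset.Ico a b, poissonWeight t n * min 1 (t / (n + 1)) ≤
      ∫ u in (a : ℝ)..b, poissonInterp t u :=
  sum_Ico_le_intervalIntegral hab (fun n _ => intervalIntegrable_poissonInterp (by positivity)
    (by positivity)) fun _ _ _ hu => poissonWeight_mul_min_le_poissonInterp ht hu

lemma integral_poissonInterp_le_one_add_mul_sum {a b : ℕ} (ht : 0 < t) (ha : 1 ≤ a) (hab : a ≤ b) :
    ∫ u in (a : ℝ)..b, poissonInterp t u ≤ (1 + t) * ∑ n ∈ Finset.Ico a b, poissonWeight t n := by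
  refine (integral_poissonInterp_le_sum ht ha hab).trans ?_
  rw [Finset.mul_sum]
  refine Finset.sum_le_sum fun n hn => ?_
  have hn : (1 : ℝ) ≤ n := by exact_mod_cast ha.trans (Finset.mem_Ico.1 hn).1
  rw [mul_comm]
  refine mul_le_mul_of_nonneg_right (max_le (by linarith) ?_) (poissonWeight_nonneg ht.le n)
  linarith [div_le_self ht.le hn]

lemma integral_poissonInterp_one_ceil_le (hε : 0 < ε) (hε' : ε ≤ 1 / 2) (htε : 2 ≤ ε * t) :
    ∫ u in (1 : ℝ)..⌈(1 - ε) * t⌉₊, poissonInterp t u ≤ (1 + t) * exp (1 - t * ε ^ 2 / 4) := by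
  have ht : 0 < t := pos_of_mul_pos_right (by linarith) hε.le
  have hN : 1 ≤ ⌈(1 - ε) * t⌉₊ := Nat.ceil_pos.2 (by nlinarith)
  have h := integral_poissonInterp_le_one_add_mul_sum ht le_rfl hN
  rw [Nat.cast_one] at h
  refine h.trans (mul_le_mul_of_nonneg_left ?_ (by linarith))
  refine le_trans ?_ (sum_range_ceil_poissonWeight_le ht.le hε.le (by linarith))
  exact Finset.sum_le_sum_of_subset_of_nonneg (Finset.Ico_subset_Ico_left zero_le_one |>.trans
    (by rw [Finset.range_eq_Ico])) fun n _ _ => poissonWeight_nonneg ht.le n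

lemma integral_poissonInterp_ceil_le (hε : 0 < ε) (hε' : ε ≤ 1 / 2) (htε : 2 ≤ ε * t) {b : ℝ}
    (hb : ⌈(1 + ε) * t⌉₊ ≤ b) :
    ∫ u in (⌈(1 + ε) * t⌉₊ : ℝ)..b, poissonInterp t u ≤ (1 + t) * exp (1 - t * ε ^ 2 / 4) := by
  have ht : 0 < t := pos_of_mul_pos_right (by linarith) hε.le
  have hN : 1 ≤ ⌈(1 + ε) * t⌉₊ := Nat.ceil_pos.2 (by positivity)
  have hNb : ⌈(1 + ε) * t⌉₊ ≤ ⌈b⌉₊ := by exact_mod_cast hb.trans (Nat.le_ceil b)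
  calc ∫ u in (⌈(1 + ε) * t⌉₊ : ℝ)..b, poissonInterp t u
      ≤ ∫ u in (⌈(1 + ε) * t⌉₊ : ℝ)..⌈b⌉₊, poissonInterp t u :=
        intervalIntegral.integral_mono_interval le_rfl hb (Nat.le_ceil b)
          (Eventually.of_forall fun _ => poissonInterp_nonneg)
          (intervalIntegrable_poissonInterp (by positivity) (by positivity))
    _ ≤ (1 + t) * ∑ n ∈ Finset.Ico ⌈(1 + ε) * t⌉₊ ⌈b⌉₊, poissonWeight t n :=
        integral_poissonInterp_le_one_add_mul_sum ht hN hNb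
    _ ≤ (1 + t) * exp (1 - t * ε ^ 2 / 4) := by
        gcongr
        exact sum_poissonWeight_le_of_ceil_le ht.le hε.le (by linarith)
          fun n hn => (Finset.mem_Ico.1 hn).1

lemma integral_poissonInterp_ceil_ceil_le (hε : 0 < ε) (hε' : ε ≤ 1 / 2) (htε : 2 ≤ ε * t) :
    ∫ u in (⌈(1 - ε) * t⌉₊ : ℝ)..⌈(1 + ε) * t⌉₊, poissonInterp t u ≤ 1 + 2 * ε := by
  have ht : 0 < t := pos_of_mul_pos_right (by linarith) hε.le
  have hN₁ : (1 - ε) * t ≤ ⌈(1 - ε) * t⌉₊ := Nat.le_ceil _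
  refine (integral_poissonInterp_le_sum ht (Nat.ceil_pos.2 (by nlinarith))
    (Nat.ceil_mono (by nlinarith))).trans ?_
  calc ∑ n ∈ Finset.Ico ⌈(1 - ε) * t⌉₊ ⌈(1 + ε) * t⌉₊, poissonWeight t n * max 1 (t / n)
      ≤ ∑ n ∈ Finset.Ico ⌈(1 - ε) * t⌉₊ ⌈(1 + ε) * t⌉₊, poissonWeight t n * (1 + 2 * ε) := by
        refine Finset.sum_le_sum fun n hn => mul_le_mul_of_nonneg_left
          (max_le (by linarith) ?_) (poissonWeight_nonneg ht.le n)
        have hn : (1 - ε) * t ≤ n := hN₁.trans (by exact_mod_cast (Finset.mem_Ico.1 hn).1)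
        rw [div_le_iff₀ (by nlinarith)]
        nlinarith
    _ ≤ 1 + 2 * ε := by
        rw [← Finset.sum_mul]
        nlinarith [sum_le_hasSum (Finset.Ico ⌈(1 - ε) * t⌉₊ ⌈(1 + ε) * t⌉₊)
          (fun n _ => poissonWeight_nonneg ht.le n) (hasSum_poissonWeight t)]

lemma le_integral_poissonInterp_ceil_ceil (hε : 0 < ε) (hε' : ε ≤ 1 / 2) (htε : 2 ≤ ε * t) :
    (1 - 2 * ε) * (1 - 2 * exp (1 - t * ε ^ 2 / 4)) ≤
      ∫ u in (⌈(1 - ε) * t⌉₊ : ℝ)..⌈(1 + ε) * t⌉₊, poissonInterp t u := by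
  have ht : 0 < t := pos_of_mul_pos_right (by linarith) hε.le
  set N₁ := ⌈(1 - ε) * t⌉₊
  set N₂ := ⌈(1 + ε) * t⌉₊
  set E := exp (1 - t * ε ^ 2 / 4)
  have hN₂ : (N₂ : ℝ) ≤ (1 + ε) * t + 1 := (Nat.ceil_lt_add_one (by positivity)).le
  have hN₁₂ : N₁ ≤ N₂ := Nat.ceil_mono (by nlinarith)
  have hsum : 1 - 2 * E ≤ ∑ n ∈ Finset.Ico N₁ N₂, poissonWeight t n := by
    have hsplit := (hasSum_poissonWeight t).summable.sum_add_tsum_nat_add N₂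
    rw [(hasSum_poissonWeight t).tsum_eq, ← Finset.sum_range_add_sum_Ico _ hN₁₂] at hsplit
    have hhead := sum_range_ceil_poissonWeight_le ht.le hε.le (by linarith)
    have htail : ∑' n, poissonWeight t (n + N₂) ≤ E :=
      Real.tsum_le_of_sum_le (fun n => poissonWeight_nonneg ht.le _) fun s => by
        simpa [Finset.sum_map] using sum_poissonWeight_le_of_ceil_le ht.le hε.le (by linarith)
          (s := s.map (addRightEmbedding N₂)) fun n hn => by
            obtain ⟨i, -, rfl⟩ := Finset.mem_map.1 hn
            exact Nat.le_add_left _ _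
    linarith
  refine le_trans ?_ (sum_le_integral_poissonInterp ht hN₁₂)
  calc (1 - 2 * ε) * (1 - 2 * E)
      ≤ ∑ n ∈ Finset.Ico N₁ N₂, poissonWeight t n * (1 - 2 * ε) := by
        rw [← Finset.sum_mul, mul_comm]
        exact mul_le_mul_of_nonneg_right hsum (by linarith)
    _ ≤ ∑ n ∈ Finset.Ico N₁ N₂, poissonWeight t n * min 1 (t / (n + 1)) := by
        refine Finset.sum_le_sum fun n hn => mul_le_mul_of_nonneg_left
          (le_min (by linarith) ?_) (poissonWeight_nonneg ht.le n)
        have hn : (n : ℝ) + 1 ≤ N₂ := by exact_mod_cast (Finset.mem_Ico.1 hn).2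
        rw [le_div_iff₀ (by positivity)]
        nlinarith

end Mass

section Approximation

lemma abs_integral_mul_le {k g : ℝ → ℝ} {a b M : ℝ} (hab : a ≤ b)
    (hk : IntervalIntegrable k volume a b) (hk0 : ∀ u ∈ Icc a b, 0 ≤ k u)
    (hgM : ∀ u ∈ Icc a b, |g u| ≤ M) :
    |∫ u in a..b, k u * g u| ≤ M * ∫ u in a..b, k u := by
  rw [← intervalIntegral.integral_const_mul M k, ← Real.norm_eq_abs]
  refine intervalIntegral.norm_integral_le_of_norm_le (f := fun u => k u * g u) hab
    (Eventually.of_forall fun u hu => ?_) (hk.const_mul M)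
  rw [Real.norm_eq_abs, abs_mul, abs_of_nonneg (hk0 u (Ioc_subset_Icc_self hu)), mul_comm]
  exact mul_le_mul_of_nonneg_right (hgM u (Ioc_subset_Icc_self hu)) (hk0 u (Ioc_subset_Icc_self hu))

lemma abs_integral_mul_sub_le {k g : ℝ → ℝ} {a b c d L M η : ℝ} (hab : a ≤ b) (hbc : b ≤ c)
    (hcd : c ≤ d) (hk : ContinuousOn k (Icc a d)) (hg : ContinuousOn g (Icc a d))
    (hk0 : ∀ u ∈ Icc a d, 0 ≤ k u) (hgM : ∀ u ∈ Icc a d, |g u| ≤ M)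
    (hgL : ∀ u ∈ Icc b c, |g u - L| ≤ η) :
    |(∫ u in a..d, k u * g u) - L| ≤
      M * ((∫ u in a..b, k u) + ∫ u in c..d, k u) + η * (∫ u in b..c, k u) +
        |L| * |(∫ u in b..c, k u) - 1| := by
  have hsub : ∀ {x y}, x ∈ Icc a d → y ∈ Icc a d → uIcc x y ⊆ Icc a d := fun hx hy =>
    uIcc_subset_Icc hx hy
  have hkint : ∀ {x y}, x ∈ Icc a d → y ∈ Icc a d → IntervalIntegrable k volume x y :=
    fun hx hy => (hk.mono (hsub hx hy)).intervalIntegrable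
  have hkgint : ∀ {x y}, x ∈ Icc a d → y ∈ Icc a d →
      IntervalIntegrable (fun u => k u * g u) volume x y :=
    fun hx hy => ((hk.mul hg).mono (hsub hx hy)).intervalIntegrable
  have ha : a ∈ Icc a d := ⟨le_rfl, by linarith⟩
  have hb : b ∈ Icc a d := ⟨hab, by linarith⟩
  have hc : c ∈ Icc a d := ⟨by linarith, hcd⟩
  have hd : d ∈ Icc a d := ⟨by linarith, le_rfl⟩
  have hsplit : (∫ u in a..d, k u * g u) - L =
      (∫ u in a..b, k u * g u) + (∫ u in c..d, k u * g u) +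
        (∫ u in b..c, k u * (g u - L)) + L * ((∫ u in b..c, k u) - 1) := by
    simp_rw [mul_sub]
    rw [intervalIntegral.integral_sub (hkgint hb hc) ((hkint hb hc).mul_const L),
      intervalIntegral.integral_mul_const, ← intervalIntegral.integral_add_adjacent_intervals
        (hkgint ha hb) (hkgint hb hd), ← intervalIntegral.integral_add_adjacent_intervals
        (hkgint hb hc) (hkgint hc hd)]
    ring
  rw [hsplit]
  refine (abs_add_le _ _).trans (add_le_add ((abs_add_le _ _).trans (add_le_add
    ((abs_add_le _ _).trans ?_) ?_)) (abs_mul _ _).le)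
  · rw [mul_add]
    exact add_le_add
      (abs_integral_mul_le hab (hkint ha hb) (fun u hu => hk0 u (Icc_subset_Icc le_rfl (by linarith) hu))
        fun u hu => hgM u (Icc_subset_Icc le_rfl (by linarith) hu))
      (abs_integral_mul_le hcd (hkint hc hd) (fun u hu => hk0 u (Icc_subset_Icc (by linarith) le_rfl hu))
        fun u hu => hgM u (Icc_subset_Icc (by linarith) le_rfl hu))
  · exact abs_integral_mul_le hbc (hkint hb hc) (fun u hu => hk0 u (Icc_subset_Icc hab hcd hu)) hgL

variable {t ε : ℝ}

lemma abs_integral_poissonInterp_mul_sub_le {g : ℝ → ℝ} {b L M η : ℝ} (hε : 0 < ε)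
    (hε' : ε ≤ 1 / 2) (htε : 2 ≤ ε * t) (hb : (1 + ε) * t + 1 ≤ b)
    (hg : ContinuousOn g (Icc 1 b)) (hgM : ∀ u ∈ Icc 1 b, |g u| ≤ M) (hL : |L| ≤ M)
    (hgL : ∀ u ∈ Icc ((1 - ε) * t) ((1 + ε) * t + 1), |g u - L| ≤ η) :
    |(∫ u in (1 : ℝ)..b, poissonInterp t u * g u) - L| ≤
      2 * (M * ε + η) + 4 * M * (1 + t) * exp (1 - t * ε ^ 2 / 4) := by
  have ht : 0 < t := pos_of_mul_pos_right (by linarith) hε.le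
  set N₁ := ⌈(1 - ε) * t⌉₊
  set N₂ := ⌈(1 + ε) * t⌉₊
  set E := exp (1 - t * ε ^ 2 / 4)
  have hN₁ : (1 - ε) * t ≤ N₁ := Nat.le_ceil _
  have hN₁' : (1 : ℝ) ≤ N₁ := by nlinarith
  have hN₂ : (N₂ : ℝ) ≤ (1 + ε) * t + 1 := (Nat.ceil_lt_add_one (by positivity)).le
  have hN₁₂ : (N₁ : ℝ) ≤ N₂ := by exact_mod_cast Nat.ceil_mono (by nlinarith)
  have hη : 0 ≤ η := (abs_nonneg _).trans (hgL ((1 - ε) * t) ⟨le_rfl, by nlinarith⟩)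
  have hM : 0 ≤ M := (abs_nonneg _).trans hL
  have hE : 0 ≤ E := (exp_pos _).le
  have hwin_le := integral_poissonInterp_ceil_ceil_le hε hε' htε
  have hwin_ge := le_integral_poissonInterp_ceil_ceil hε hε' htε
  have hhead := integral_poissonInterp_one_ceil_le hε hε' htε
  have htail := integral_poissonInterp_ceil_le hε hε' htε (hN₂.trans hb)
  have hwin : |(∫ u in (N₁ : ℝ)..N₂, poissonInterp t u) - 1| ≤ 2 * ε + 2 * E := by
    rw [abs_le]
    exact ⟨by nlinarith [mul_pos hε (exp_pos (1 - t * ε ^ 2 / 4))], by linarith⟩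
  refine (abs_integral_mul_sub_le hN₁' hN₁₂ (hN₂.trans hb)
    (continuousOn_poissonInterp.mono fun u hu => show -1 < u by linarith [hu.1]) hg
    (fun _ _ => poissonInterp_nonneg) hgM
    fun u hu => hgL u ⟨hN₁.trans hu.1, hu.2.trans hN₂⟩).trans ?_
  have h1 := mul_le_mul_of_nonneg_left (add_le_add hhead htail) hM
  have h2 := mul_le_mul_of_nonneg_left hwin_le hη
  have h3 := mul_le_mul hL hwin (abs_nonneg _) hM
  nlinarith [mul_nonneg hM (mul_nonneg ht.le hE), mul_nonneg hη hε.le]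

lemma tendsto_one_add_mul_exp_sub_mul (c : ℝ) (hc : 0 < c) :
    Tendsto (fun t => (1 + t) * exp (1 - c * t)) atTop (𝓝 0) := by
  have hs := tendsto_id.const_mul_atTop hc
  have h := (((tendsto_pow_mul_exp_neg_atTop_nhds_zero 0).comp hs).add
    (((tendsto_pow_mul_exp_neg_atTop_nhds_zero 1).comp hs).const_mul c⁻¹)).const_mul (exp 1)
  rw [mul_zero, add_zero, mul_zero] at h
  refine h.congr fun t => ?_
  simp only [Function.comp_apply, id, pow_zero, pow_one, one_mul, sub_eq_add_neg, exp_add]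
  field_simp

lemma dist_div_lt_of_mem_Icc {m x ε δ u : ℝ} (hm : 0 < m) (hδ : 0 < δ) (hεx : ε * x ≤ δ / 2)
    (hmδ : 2 / δ < m) (hu : u ∈ Icc ((1 - ε) * (m * x)) ((1 + ε) * (m * x) + 1)) :
    dist (u / m) x < δ := by
  have h1 : (1 - ε) * x ≤ u / m := by rw [le_div_iff₀ hm]; linarith [hu.1]
  have h2 : u / m ≤ (1 + ε) * x + 1 / m := by
    rw [div_le_iff₀ hm, add_mul, div_mul_cancel₀ _ hm.ne']
    linarith [hu.2]
  have h3 : 1 / m < δ / 2 := by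
    rw [div_lt_iff₀ hδ] at hmδ
    rw [div_lt_iff₀ hm]
    linarith
  rw [Real.dist_eq, abs_lt]
  constructor <;> linarith

theorem tendsto_integral_poissonInterp_mul_comp_div {g : ℝ → ℝ} {M x : ℝ}
    (hg : ContinuousOn g (Ioi 0)) (hgM : ∀ y, 0 < y → |g y| ≤ M) (hx : 0 < x) :
    Tendsto (fun m => ∫ u in (1 : ℝ)..m ^ 2, poissonInterp (m * x) u * g (u / m)) atTop
      (𝓝 (g x)) := by
  rw [Metric.tendsto_nhds]
  intro ε₀ hε₀
  have hM : 0 ≤ M := (abs_nonneg _).trans (hgM x hx)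
  obtain ⟨δ, hδ, hgδ⟩ := Metric.continuousAt_iff.1 (hg.continuousAt (Ioi_mem_nhds hx)) (ε₀ / 8)
    (by positivity)
  obtain ⟨ε, hε, hε', hεM, hεx⟩ : ∃ ε, 0 < ε ∧ ε ≤ 1 / 2 ∧ M * ε ≤ ε₀ / 8 ∧ ε * x ≤ δ / 2 := by
    set ε := min (1 / 2) (min (ε₀ / (8 * (M + 1))) (δ / (2 * x)))
    refine ⟨ε, lt_min (by norm_num) (lt_min (by positivity) (by positivity)), min_le_left _ _,
      ?_, ?_⟩
    · have h : ε ≤ ε₀ / (8 * (M + 1)) := (min_le_right _ _).trans (min_le_left _ _)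
      rw [le_div_iff₀ (by positivity)] at h
      nlinarith
    · have h : ε ≤ δ / (2 * x) := (min_le_right _ _).trans (min_le_right _ _)
      rw [le_div_iff₀ (by positivity)] at h
      linarith
  have herr := ((tendsto_one_add_mul_exp_sub_mul (ε ^ 2 / 4) (by positivity)).comp
    (tendsto_id.atTop_mul_const hx)).const_mul (4 * M)
  rw [mul_zero] at herr
  filter_upwards [eventually_ge_atTop 1, eventually_gt_atTop (2 / δ),
    eventually_ge_atTop (2 / (ε * x)), eventually_ge_atTop ((1 + ε) * x + 1),
    herr.eventually_lt_const (show 0 < ε₀ / 2 by positivity)] with m hm1 hmδ hmε hmb herrm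
  have hm : 0 < m := by linarith
  have hmx : 2 ≤ ε * (m * x) := by
    rw [div_le_iff₀ (by positivity)] at hmε
    linarith
  have hpos : ∀ u, 1 ≤ u → 0 < u / m := fun u hu => div_pos (by linarith) hm
  have key := abs_integral_poissonInterp_mul_sub_le (t := m * x) (g := fun u => g (u / m))
    (b := m ^ 2) (L := g x) (η := ε₀ / 8) hε hε' hmx (by nlinarith)
    (hg.comp (continuousOn_id.div_const m) fun u hu => hpos u hu.1)
    (fun u hu => hgM _ (hpos u hu.1)) (hgM x hx)
    fun u hu => by
      rw [← Real.dist_eq]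
      exact (hgδ (dist_div_lt_of_mem_Icc hm hδ hεx hmδ hu)).le
  simp only [Function.comp_apply, id] at herrm
  rw [Real.dist_eq]
  calc _ ≤ _ := key
    _ < ε₀ := by
      ring_nf at herrm ⊢
      linarith

end Approximation

section Reduction

lemma tendsto_setIntegral_Icc_inv_self {f : ℝ → ℝ} (hf : IntegrableOn f (Ioi 0)) :
    Tendsto (fun m => ∫ s in Icc m⁻¹ m, f s) atTop (𝓝 (∫ s in Ioi 0, f s)) := by
  have hcov : AECover (volume.restrict (Ioi 0)) atTop (fun m : ℝ => Icc m⁻¹ m) :=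
    ⟨(ae_restrict_iff' measurableSet_Ioi).2 (ae_of_all _ fun x (hx : 0 < x) =>
      (tendsto_inv_atTop_zero.eventually_le_const hx).and (eventually_ge_atTop x)),
      fun _ => measurableSet_Icc⟩
  refine (hcov.integral_tendsto_of_countably_generated hf).congr' ?_
  filter_upwards [eventually_gt_atTop 0] with m hm
  rw [Measure.restrict_restrict measurableSet_Icc,
    inter_eq_self_of_subset_left
      (show Icc m⁻¹ m ⊆ Ioi 0 from fun y hy => (inv_pos.2 hm).trans_le hy.1)]

lemma poissonInterp_eq_rpow {t u : ℝ} (ht : 0 < t) (hu : -1 < u) :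
    poissonInterp t u = t ^ u * exp (-t) / Gamma (u + 1) := by
  rw [poissonInterp, exp_sub, exp_sub, exp_log (Gamma_pos_of_pos (by linarith)),
    rpow_def_of_pos ht, mul_comm (log t), exp_neg]
  field_simp

lemma gammaPDF_mul_inv_eq_poissonInterp {m x α : ℝ} (hm : 0 < m) (hx : 0 < x) (hα : 0 < α) :
    m ^ α * x ^ (α - 1) * exp (-m * x) / Gamma α * m⁻¹ = poissonInterp (m * x) (α - 1) := by
  rw [poissonInterp_eq_rpow (by positivity) (by linarith), sub_add_cancel,
    mul_rpow hm.le hx.le, rpow_sub_one hm.ne', neg_mul]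
  field_simp

lemma setIntegral_gammaPDF_eq {g : ℝ → ℝ} {m x : ℝ} (hm : 1 ≤ m) (hx : 0 < x) :
    ∫ α in Icc (2 : ℝ) (1 + m ^ 2),
        m ^ α * x ^ (α - 1) * exp (-m * x) / Gamma α * m⁻¹ * g ((α - 1) / m) =
      ∫ u in (1 : ℝ)..m ^ 2, poissonInterp (m * x) u * g (u / m) := by
  rw [integral_Icc_eq_integral_Ioc, ← intervalIntegral.integral_of_le (by nlinarith),
    show (2 : ℝ) = 1 + 1 by norm_num, add_comm 1 (m ^ 2),
    ← intervalIntegral.integral_comp_add_right]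
  refine intervalIntegral.integral_congr fun u hu => ?_
  have hu : 1 ≤ u := by
    rw [uIcc_of_le (by nlinarith)] at hu
    exact hu.1
  have h := gammaPDF_mul_inv_eq_poissonInterp (m := m) (α := u + 1) (by linarith) hx (by linarith)
  simp only [add_sub_cancel_right] at h ⊢
  rw [h]

end Reduction

end GammaSmoothing

theorem gamma_kernel_smoothing_tendsto_general
    (f0 : ℝ → ℝ) (hf0_cont : ContinuousOn f0 (Set.Ici 0))
    (hf0_prob : ∫ x in Set.Ioi (0 : ℝ), f0 x = 1)
    -- (B4) 0 < f0 ≤ M on (0,∞)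
    (hf0_bdd : ∃ M : ℝ, ∀ x : ℝ, 0 < x → 0 < f0 x ∧ f0 x ≤ M)
    -- the gamma kernel with shape α and scale 1/m
    (Km : ℝ → ℝ → ℝ → ℝ)
    (hKm : ∀ m x α : ℝ, Km m x α = m ^ α * x ^ (α - 1) * Real.exp (-m * x) / Real.Gamma α)
    -- the normalizing constant
    (tm : ℝ → ℝ) (htm : ∀ m : ℝ, tm m = (∫ s in Set.Icc m⁻¹ m, f0 s)⁻¹)
    -- the smoothed density
    (fm : ℝ → ℝ → ℝ)
    (hfm : ∀ m x : ℝ, fm m x =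
      tm m * ∫ α in Set.Icc (2 : ℝ) (1 + m ^ 2), Km m x α * m⁻¹ * f0 ((α - 1) / m)) :
    ∀ x : ℝ, 0 < x → Tendsto (fun m : ℝ => fm m x) atTop (nhds (f0 x)) := by
  intro x hx
  obtain ⟨M, hM⟩ := hf0_bdd
  have hf0_int : IntegrableOn f0 (Set.Ioi 0) := by
    by_contra h
    rw [integral_undef h] at hf0_prob
    exact zero_ne_one hf0_prob
  have htm_lim : Tendsto tm atTop (nhds 1) := by
    have h := GammaSmoothing.tendsto_setIntegral_Icc_inv_self hf0_int
    rw [hf0_prob] at h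
    rw [← inv_one]
    exact (h.inv₀ one_ne_zero).congr fun m => (htm m).symm
  have hI := GammaSmoothing.tendsto_integral_poissonInterp_mul_comp_div
    (hf0_cont.mono Set.Ioi_subset_Ici_self)
    (fun y hy => (abs_of_pos (hM y hy).1).trans_le (hM y hy).2) hx
  have h := htm_lim.mul hI
  rw [one_mul] at h
  refine h.congr' ?_
  filter_upwards [eventually_ge_atTop 1] with m hm
  simp only [hfm, hKm, GammaSmoothing.setIntegral_gammaPDF_eq hm hx]

/-- **Lemma 6**: pointwise convergence of the gamma-kernel smoothing
`f_m(x) = t_m ∫_2^{1+m²} K_m(x;α) m⁻¹ f0((α−1)/m) dα` of a density `f0` on `[0,∞)`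
satisfying the conditions of the gamma-mixture theorem, where `K_m(·;α)` is the
Gamma(α, 1/m) density and `t_m` the normalizing constant of `f0` restricted to `[1/m, m]`. -/
theorem gamma_kernel_smoothing_tendsto
    (f0 : ℝ → ℝ) (hf0_cont : ContinuousOn f0 (Set.Ici 0))
    (hf0_prob : ∫ x in Set.Ioi (0 : ℝ), f0 x = 1)
    -- (B4) 0 < f0 ≤ M on (0,∞)
    (hf0_bdd : ∃ M : ℝ, ∀ x : ℝ, 0 < x → 0 < f0 x ∧ f0 x ≤ M)
    -- (B5) entropy condition
    (hf0_log : IntegrableOn (fun x => f0 x * log (f0 x)) (Set.Ioi 0))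
    -- the one-sided lower envelope
    (δ : ℝ) (hδ : 0 < δ) (φδ : ℝ → ℝ)
    (hφδ_lt : ∀ x : ℝ, 0 < x → x < 1 → φδ x = sInf (f0 '' Set.Icc x (x + δ)))
    (hφδ_ge : ∀ x : ℝ, 1 ≤ x → φδ x = sInf (f0 '' Set.Ioc (x - δ) x))
    -- (B6*) envelope integrability
    (hf0_env : IntegrableOn (fun x => f0 x * log (f0 x / φδ x)) (Set.Ioi 0))
    -- (B7*) moment condition
    (hf0_mom : ∃ η > (0 : ℝ),
      IntegrableOn (fun x => max (x ^ (-η - 2)) (x ^ (η + 2)) * f0 x) (Set.Ioi 0))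
    -- the gamma kernel with shape α and scale 1/m
    (Km : ℝ → ℝ → ℝ → ℝ)
    (hKm : ∀ m x α : ℝ, Km m x α = m ^ α * x ^ (α - 1) * Real.exp (-m * x) / Real.Gamma α)
    -- the normalizing constant
    (tm : ℝ → ℝ) (htm : ∀ m : ℝ, tm m = (∫ s in Set.Icc m⁻¹ m, f0 s)⁻¹)
    -- the smoothed density
    (fm : ℝ → ℝ → ℝ)
    (hfm : ∀ m x : ℝ, fm m x =
      tm m * ∫ α in Set.Icc (2 : ℝ) (1 + m ^ 2), Km m x α * m⁻¹ * f0 ((α - 1) / m)) :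
    ∀ x : ℝ, 0 < x → Tendsto (fun m : ℝ => fm m x) atTop (nhds (f0 x)) :=
  gamma_kernel_smoothing_tendsto_general f0 hf0_cont hf0_prob hf0_bdd Km hKm tm htm fm hfm
end
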